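/- arXiv:1402.5758 — 6 statements merged into one kernel-verified Lean document; each statement's English description precedes it below -/
import Mathlib

section
/- Let f be a concave function on [0,1]^d that is C-smooth, i.e., f(z + α(y − z)) ≥ f(z) + α ∇f(z)·(y − z) − (C/2)α² for all y, z ∈ [0,1]^d and α ∈ [0,1]. Suppose a sequence x₁, x₂, … in [0,1]^d and a point x* satisfy ∇f(x̄_t)·(x_{t+1} − x̄_t) ≥ f(x*) − f(x̄_t) for all t ≥ 0 (where x̄_t = (1/t)∑_{s=1}^t x_s and x̄_0 is arbitrary). Then for all T ≥ 1, f(x*) − f(x̄_T) ≤ C·log₂(2T)/(2T). -/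
open Finset

/-!
Write `xbar t` as a running average, so `xbar (t+1) = xbar t + α (x (t+1) - xbar t)` with
`α = 1/(t+1)`. Smoothness at `xbar t` toward `x (t+1)` together with the Frank–Wolfe condition
gives the recursion `e (t+1) ≤ (1 - α) e t + C α² / 2` for the gap `e t = f x* - f (xbar t)`.
Multiplying by `t + 1` telescopes it into `T e T ≤ (C/2) H_T`, and `H_T ≤ 1 + log T ≤ log₂ (2T)`.
-/

section RunningAverage

variable {E : Type*} [AddCommGroup E] [Module ℝ E] {x xbar : ℕ → E}

theorem runningAverage_succ (h : ∀ t : ℕ, (t : ℝ) • xbar t = ∑ s ∈ Icc 1 t, x s) (t : ℕ) :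
    xbar (t + 1) = xbar t + ((t : ℝ) + 1)⁻¹ • (x (t + 1) - xbar t) := by
  have hsucc : ((t : ℝ) + 1) • xbar (t + 1) = (t : ℝ) • xbar t + x (t + 1) := by
    rw [h t, ← Nat.cast_succ, h (t + 1), sum_Icc_succ_top (Nat.le_add_left 1 t)]
  have ht : (t : ℝ) + 1 ≠ 0 := by positivity
  rw [← inv_smul_smul₀ ht (xbar (t + 1)), hsucc]
  match_scalars <;> field_simp; ring

theorem runningAverage_mem {s : Set E} (hs : Convex ℝ s) (hx : ∀ t, x t ∈ s) (h0 : xbar 0 ∈ s)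
    (hsucc : ∀ t : ℕ, xbar (t + 1) = xbar t + ((t : ℝ) + 1)⁻¹ • (x (t + 1) - xbar t)) :
    ∀ t, xbar t ∈ s
  | 0 => h0
  | t + 1 => by
    rw [hsucc t]
    exact hs.add_smul_sub_mem (runningAverage_mem hs hx h0 hsucc t) (hx (t + 1))
      ⟨by positivity, inv_le_one_of_one_le₀ (by simp)⟩

end RunningAverage

theorem harmonic_le_logb_two_mul {n : ℕ} (hn : 1 ≤ n) : (harmonic n : ℝ) ≤ Real.logb 2 (2 * n) := by
  have hlog_nonneg : 0 ≤ Real.log n := Real.log_nonneg (by exact_mod_cast hn)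
  have hlog_two_pos : 0 < Real.log 2 := Real.log_pos one_lt_two
  have hlog_le_logb : Real.log n ≤ Real.logb 2 n := by
    rw [Real.logb, le_div_iff₀ hlog_two_pos]
    nlinarith [Real.log_two_lt_d9]
  rw [Real.logb_mul two_ne_zero (by positivity), Real.logb_self_eq_one one_lt_two]
  linarith [harmonic_le_one_add_log n]

section Recursion

variable {e : ℕ → ℝ} {C : ℝ}

theorem natCast_mul_le_harmonic_of_step
    (h : ∀ t : ℕ, e (t + 1) ≤ (1 - ((t : ℝ) + 1)⁻¹) * e t + C / 2 * ((t : ℝ) + 1)⁻¹ ^ 2) :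
    ∀ T : ℕ, T * e T ≤ C / 2 * harmonic T
  | 0 => by simp
  | t + 1 => by
    have ih := natCast_mul_le_harmonic_of_step h t
    have ht : (0 : ℝ) < t + 1 := by positivity
    have hmul : ((t : ℝ) + 1) * e (t + 1) ≤ t * e t + C / 2 * ((t : ℝ) + 1)⁻¹ := by
      calc ((t : ℝ) + 1) * e (t + 1)
          ≤ (t + 1) * ((1 - ((t : ℝ) + 1)⁻¹) * e t + C / 2 * ((t : ℝ) + 1)⁻¹ ^ 2) :=
            mul_le_mul_of_nonneg_left (h t) ht.le
        _ = t * e t + C / 2 * ((t : ℝ) + 1)⁻¹ := by field_simp; ring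
    push_cast [harmonic_succ]
    linarith

theorem le_logb_of_step (hC : 0 ≤ C)
    (h : ∀ t : ℕ, e (t + 1) ≤ (1 - ((t : ℝ) + 1)⁻¹) * e t + C / 2 * ((t : ℝ) + 1)⁻¹ ^ 2)
    {T : ℕ} (hT : 1 ≤ T) : e T ≤ C * Real.logb 2 (2 * T) / (2 * T) := by
  have hT0 : (0 : ℝ) < T := by exact_mod_cast hT
  rw [le_div_iff₀ (by positivity)]
  nlinarith [natCast_mul_le_harmonic_of_step h T, harmonic_le_logb_two_mul hT]

end Recursion

theorem stmt_3_general (d : ℕ) (C : ℝ) (hC : 0 ≤ C)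
    (f : (Fin d → ℝ) → ℝ) (gf : (Fin d → ℝ) → (Fin d → ℝ))
    (hsmooth : ∀ y ∈ Set.Icc (0 : Fin d → ℝ) 1, ∀ z ∈ Set.Icc (0 : Fin d → ℝ) 1,
        ∀ α ∈ Set.Icc (0 : ℝ) 1,
        f (z + α • (y - z)) ≥ f z + α * (∑ i, gf z i * (y i - z i)) - C / 2 * α ^ 2)
    (x : ℕ → (Fin d → ℝ)) (hx : ∀ t, x t ∈ Set.Icc (0 : Fin d → ℝ) 1)
    (xstar : Fin d → ℝ)
    (xbar : ℕ → (Fin d → ℝ))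
    (hxbar0 : xbar 0 ∈ Set.Icc (0 : Fin d → ℝ) 1)
    (hxbar : ∀ t : ℕ, 1 ≤ t → xbar t = (t : ℝ)⁻¹ • ∑ s ∈ Finset.Icc 1 t, x s)
    (hFW : ∀ t : ℕ, (∑ i, gf (xbar t) i * (x (t + 1) i - xbar t i)) ≥ f xstar - f (xbar t)) :
    ∀ T : ℕ, 1 ≤ T → f xstar - f (xbar T) ≤ C * Real.logb 2 (2 * T) / (2 * T) := by
  have hsum : ∀ t : ℕ, (t : ℝ) • xbar t = ∑ s ∈ Icc 1 t, x s
    | 0 => by simp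
    | t + 1 => by rw [hxbar (t + 1) (Nat.le_add_left 1 t), smul_inv_smul₀ (by positivity)]
  have hsucc := runningAverage_succ hsum
  have hmem := runningAverage_mem (convex_Icc 0 1) hx hxbar0 hsucc
  intro T hT
  refine le_logb_of_step (e := fun t => f xstar - f (xbar t)) hC (fun t => ?_) hT
  have hα : ((t : ℝ) + 1)⁻¹ ∈ Set.Icc (0 : ℝ) 1 := ⟨by positivity, inv_le_one_of_one_le₀ (by simp)⟩
  have hsmooth_t := hsmooth _ (hx (t + 1)) _ (hmem t) _ hα
  rw [← hsucc t] at hsmooth_t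
  nlinarith [mul_le_mul_of_nonneg_left (hFW t) hα.1]

/-- Frank–Wolfe convergence: if `f` is concave and `C`-smooth on `[0,1]^d` and the sequence
satisfies the linear-optimization condition `∇f(x̄_t)·(x_{t+1} − x̄_t) ≥ f(x*) − f(x̄_t)`,
then `f(x*) − f(x̄_T) ≤ C log₂(2T)/(2T)` for all `T ≥ 1`. -/
theorem stmt_3 (d : ℕ) (C : ℝ) (hC : 0 ≤ C)
    (f : (Fin d → ℝ) → ℝ) (gf : (Fin d → ℝ) → (Fin d → ℝ))
    (hf : ConcaveOn ℝ (Set.Icc (0 : Fin d → ℝ) 1) f)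
    (hsmooth : ∀ y ∈ Set.Icc (0 : Fin d → ℝ) 1, ∀ z ∈ Set.Icc (0 : Fin d → ℝ) 1,
        ∀ α ∈ Set.Icc (0 : ℝ) 1,
        f (z + α • (y - z)) ≥ f z + α * (∑ i, gf z i * (y i - z i)) - C / 2 * α ^ 2)
    (x : ℕ → (Fin d → ℝ)) (hx : ∀ t, x t ∈ Set.Icc (0 : Fin d → ℝ) 1)
    (xstar : Fin d → ℝ) (hxstar : xstar ∈ Set.Icc (0 : Fin d → ℝ) 1)
    (xbar : ℕ → (Fin d → ℝ))
    (hxbar0 : xbar 0 ∈ Set.Icc (0 : Fin d → ℝ) 1)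
    (hxbar : ∀ t : ℕ, 1 ≤ t → xbar t = (t : ℝ)⁻¹ • ∑ s ∈ Finset.Icc 1 t, x s)
    (hFW : ∀ t : ℕ, (∑ i, gf (xbar t) i * (x (t + 1) i - xbar t i)) ≥ f xstar - f (xbar t)) :
    ∀ T : ℕ, 1 ≤ T → f xstar - f (xbar T) ≤ C * Real.logb 2 (2 * T) / (2 * T) :=
  stmt_3_general d C hC f gf hsmooth x hx xstar xbar hxbar0 hxbar hFW
end

section
/- Suppose Δ_t ≥ 0 satisfy Δ₁ ≤ C/2 and Δ_{t+1} ≤ (t/(t+1))Δ_t + C/(2(t+1)²) for all t ≥ 1, where C ≥ 0. Then Δ_t ≤ C·log₂(2t)/(2t) for all t ≥ 1. -/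
/-! The bound `B t = C log₂(2t)/(2t)` is a supersolution of the recursion: multiplying by `t/(t+1)`
turns `B t` into `C log₂(2t)/(2(t+1))`, and the added term `C/(2(t+1)²)` is absorbed because
`1/(t+1) ≤ ln((t+1)/t) ≤ log₂((t+1)/t)`. Induction from `B 1 = C/2` finishes the proof. -/

open Real

lemma inv_add_one_le_log_add_one_div {x : ℝ} (hx : 0 < x) : (x + 1)⁻¹ ≤ log ((x + 1) / x) := by
  have h := one_sub_inv_le_log_of_pos (show 0 < (x + 1) / x by positivity)
  rwa [inv_div, one_sub_div (by positivity), add_sub_cancel_left, one_div] at h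

lemma log_le_logb_of_le_exp_one {b y : ℝ} (hb : 1 < b) (hbe : b ≤ exp 1) (hy : 0 ≤ log y) :
    log y ≤ logb b y := by
  have hlogb : 0 < log b := log_pos hb
  have hlogb_le : log b ≤ 1 := (log_le_iff_le_exp (by linarith)).2 hbe
  rw [logb, le_div_iff₀ hlogb]
  nlinarith

lemma logb_two_mul_add_inv_le {x : ℝ} (hx : 0 < x) :
    logb 2 (2 * x) + (x + 1)⁻¹ ≤ logb 2 (2 * (x + 1)) := by
  have hquot : logb 2 (2 * (x + 1)) - logb 2 (2 * x) = logb 2 ((x + 1) / x) := by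
    rw [← logb_div (by positivity) (by positivity), mul_div_mul_left _ _ two_ne_zero]
  have hinv := inv_add_one_le_log_add_one_div hx
  have hlog := log_le_logb_of_le_exp_one one_lt_two
    (by linarith [add_one_le_exp (1 : ℝ)]) ((inv_nonneg.2 (by linarith)).trans hinv)
  linarith

lemma mul_logb_two_bound_step {C x : ℝ} (hC : 0 ≤ C) (hx : 0 < x) :
    x / (x + 1) * (C * logb 2 (2 * x) / (2 * x)) + C / (2 * (x + 1) ^ 2)
      ≤ C * logb 2 (2 * (x + 1)) / (2 * (x + 1)) := by
  have hrewrite : x / (x + 1) * (C * logb 2 (2 * x) / (2 * x)) + C / (2 * (x + 1) ^ 2)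
      = C * (logb 2 (2 * x) + (x + 1)⁻¹) / (2 * (x + 1)) := by
    field_simp
  rw [hrewrite]
  gcongr
  exact logb_two_mul_add_inv_le hx

theorem stmt_4_general (C : ℝ) (hC : 0 ≤ C) (Δ : ℕ → ℝ)
    (h1 : Δ 1 ≤ C / 2)
    (hrec : ∀ t : ℕ, 1 ≤ t →
        Δ (t + 1) ≤ ((t : ℝ) / ((t : ℝ) + 1)) * Δ t + C / (2 * ((t : ℝ) + 1) ^ 2)) :
    ∀ t : ℕ, 1 ≤ t → Δ t ≤ C * Real.logb 2 (2 * t) / (2 * t) := by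
  refine Nat.le_induction (by simpa using h1) fun t ht ih => ?_
  have ht' : (0 : ℝ) < t := by exact_mod_cast ht
  push_cast
  calc Δ (t + 1) ≤ (t / (t + 1)) * Δ t + C / (2 * ((t : ℝ) + 1) ^ 2) := hrec t ht
    _ ≤ (t / (t + 1)) * (C * logb 2 (2 * t) / (2 * t)) + C / (2 * ((t : ℝ) + 1) ^ 2) := by
      gcongr
    _ ≤ C * logb 2 (2 * (t + 1)) / (2 * (t + 1)) := mul_logb_two_bound_step hC ht'

/-- Recursive bound: if `Δ₁ ≤ C/2` and `Δ_{t+1} ≤ (t/(t+1))Δ_t + C/(2(t+1)²)`, then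
`Δ_t ≤ C log₂(2t)/(2t)` for all `t ≥ 1`. -/
theorem stmt_4 (C : ℝ) (hC : 0 ≤ C) (Δ : ℕ → ℝ)
    (hΔ : ∀ t : ℕ, 1 ≤ t → 0 ≤ Δ t)
    (h1 : Δ 1 ≤ C / 2)
    (hrec : ∀ t : ℕ, 1 ≤ t →
        Δ (t + 1) ≤ ((t : ℝ) / ((t : ℝ) + 1)) * Δ t + C / (2 * ((t : ℝ) + 1) ^ 2)) :
    ∀ t : ℕ, 1 ≤ t → Δ t ≤ C * Real.logb 2 (2 * t) / (2 * t) :=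
  stmt_4_general C hC Δ h1 hrec
end

section
/- Let f : [0,1]^d → ℝ be concave with all supergradients of dual norm at most L, let f* be its Fenchel conjugate (over [0,1]^d), and for μ > 0 define f̂_μ(z) = min_{‖θ‖ ≤ L} ( f*(θ) + (μ/(2L))‖θ‖² − θ·z ), where ‖·‖ is the Euclidean norm. Then f̂_μ(z) − (μ/2)L ≤ f(z) ≤ f̂_μ(z) for all z ∈ [0,1]^d. -/
/-!
The upper bound is the Fenchel–Young inequality `⟪z, θ⟫ + f z ≤ f* θ` plus nonnegativity of the
quadratic penalty. For the lower bound it suffices to find a supergradient `g` of `f` at `z` with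
`‖g‖ ≤ L`: then `θ = -g` gives `f* θ - ⟪θ, z⟫ ≤ f z`, and the penalty is at most `μ L / 2`.
Such a supergradient exists even on the boundary of the cube: separate `(z, f z)` from the open
convex strict hypograph of the `L`-Lipschitz concave extension of `f`. Since this hypograph
contains the cone `{(z + v, f z + t) | t < -L‖v‖}`, the separating functional has slope at most `L`.
-/

/-- The cube `[0,1]^d` in Euclidean space. -/
def cube (d : ℕ) : Set (EuclideanSpace ℝ (Fin d)) := {y | ∀ i, y i ∈ Set.Icc (0 : ℝ) 1}

open scoped InnerProductSpace

section Supergradient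

variable {E : Type*} [NormedAddCommGroup E] {K : Set E} {f : E → ℝ} {L : ℝ}

/- The set below is the strict hypograph of `x ↦ ⨆ y ∈ K, f y - L * ‖x - y‖`, the concave
`L`-Lipschitz extension of `f` from `K` to the whole space. -/
theorem isOpen_setOf_exists_lt_sub_mul_norm :
    IsOpen {p : E × ℝ | ∃ y ∈ K, p.2 < f y - L * ‖p.1 - y‖} := by
  have hS : {p : E × ℝ | ∃ y ∈ K, p.2 < f y - L * ‖p.1 - y‖} =
      ⋃ y ∈ K, {p : E × ℝ | p.2 < f y - L * ‖p.1 - y‖} := by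
    ext; simp
  rw [hS]
  exact isOpen_biUnion fun y _ => isOpen_lt continuous_snd (by fun_prop)

variable [NormedSpace ℝ E]

theorem ConcaveOn.convex_setOf_exists_lt_sub_mul_norm (hf : ConcaveOn ℝ K f) (hL : 0 ≤ L) :
    Convex ℝ {p : E × ℝ | ∃ y ∈ K, p.2 < f y - L * ‖p.1 - y‖} := by
  rintro ⟨x₁, t₁⟩ ⟨y₁, hy₁, h₁⟩ ⟨x₂, t₂⟩ ⟨y₂, hy₂, h₂⟩ a b ha hb hab
  refine ⟨a • y₁ + b • y₂, hf.1 hy₁ hy₂ ha hb hab, ?_⟩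
  have hconc : a * f y₁ + b * f y₂ ≤ f (a • y₁ + b • y₂) := hf.2 hy₁ hy₂ ha hb hab
  have hnorm : ‖a • x₁ + b • x₂ - (a • y₁ + b • y₂)‖ ≤ a * ‖x₁ - y₁‖ + b * ‖x₂ - y₂‖ :=
    calc ‖a • x₁ + b • x₂ - (a • y₁ + b • y₂)‖ = ‖a • (x₁ - y₁) + b • (x₂ - y₂)‖ := by
          congr 1; module
      _ ≤ ‖a • (x₁ - y₁)‖ + ‖b • (x₂ - y₂)‖ := norm_add_le _ _
      _ = a * ‖x₁ - y₁‖ + b * ‖x₂ - y₂‖ := by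
          rw [norm_smul, norm_smul, Real.norm_of_nonneg ha, Real.norm_of_nonneg hb]
  have hcomb : a * t₁ + b * t₂ < a * (f y₁ - L * ‖x₁ - y₁‖) + b * (f y₂ - L * ‖x₂ - y₂‖) := by
    rcases ha.eq_or_lt with rfl | ha'
    · obtain rfl : b = 1 := by linarith
      simpa using h₂
    · nlinarith [mul_lt_mul_of_pos_left h₁ ha', mul_le_mul_of_nonneg_left h₂.le hb]
  simp only [Prod.fst_add, Prod.smul_fst, Prod.snd_add, Prod.smul_snd, smul_eq_mul]
  nlinarith [mul_le_mul_of_nonneg_left hnorm hL]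

theorem ConcaveOn.exists_strongDual_supergradient (hf : ConcaveOn ℝ K f) (hL : 0 ≤ L) {z : E}
    (hz : z ∈ K) (hlip : ∀ y ∈ K, f y - f z ≤ L * ‖y - z‖) :
    ∃ φ : StrongDual ℝ E, ‖φ‖ ≤ L ∧ ∀ y ∈ K, f y ≤ f z + φ (y - z) := by
  set S := {p : E × ℝ | ∃ y ∈ K, p.2 < f y - L * ‖p.1 - y‖}
  have hzS : (z, f z) ∉ S := by
    rintro ⟨y, hy, hlt⟩
    have := hlip y hy
    rw [norm_sub_rev] at this
    linarith
  obtain ⟨ℓ, hℓ⟩ := geometric_hahn_banach_open_point (hf.convex_setOf_exists_lt_sub_mul_norm hL)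
    isOpen_setOf_exists_lt_sub_mul_norm hzS
  set ψ : StrongDual ℝ E := ℓ.comp (ContinuousLinearMap.inl ℝ E ℝ)
  set c := ℓ (0, 1)
  have hℓ_apply : ∀ v t, ℓ (v, t) = ψ v + t * c := by
    intro v t
    have : ((v, t) : E × ℝ) = (v, 0) + t • (0, 1) := by simp
    rw [this, map_add, map_smul, smul_eq_mul]
    rfl
  have hℓS : ∀ y ∈ K, ∀ v t, t < f y - L * ‖v - y‖ → ψ v + t * c < ψ z + f z * c := by
    intro y hy v t ht
    rw [← hℓ_apply, ← hℓ_apply]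
    exact hℓ _ ⟨y, hy, ht⟩
  have hc : 0 < c := by
    have := hℓS z hz z (f z - 1) (by simp)
    linarith
  have hψ : ∀ v, ψ v ≤ c * L * ‖v‖ := by
    intro v
    refine le_of_forall_gt_imp_ge_of_dense fun s hs => ?_
    have hsc : L * ‖v‖ < s / c := by rw [lt_div_iff₀ hc]; linarith
    have := hℓS z hz (z + v) (f z - s / c) (by simpa using hsc)
    rw [map_add, sub_mul, div_mul_cancel₀ _ hc.ne'] at this
    linarith
  have hsuper : ∀ y ∈ K, f y ≤ f z + c⁻¹ * (ψ z - ψ y) := by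
    intro y hy
    refine le_of_forall_lt fun s hs => ?_
    have := hℓS y hy y s (by simpa using hs)
    have : s - f z < c⁻¹ * (ψ z - ψ y) := by rw [lt_inv_mul_iff₀ hc]; linarith
    linarith
  refine ⟨-c⁻¹ • ψ, ContinuousLinearMap.opNorm_le_bound _ hL fun v => ?_, fun y hy => ?_⟩
  · have hψ_neg := hψ (-v)
    rw [map_neg, norm_neg] at hψ_neg
    rw [smul_apply, norm_smul, norm_neg, norm_inv, Real.norm_of_nonneg hc.le,
      Real.norm_eq_abs, inv_mul_le_iff₀ hc, abs_le]
    constructor <;> linarith [hψ v]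
  · have := hsuper y hy
    rw [smul_apply, smul_eq_mul, map_sub]
    linarith

end Supergradient

theorem ConcaveOn.exists_inner_supergradient {E : Type*} [NormedAddCommGroup E]
    [InnerProductSpace ℝ E] [CompleteSpace E] {K : Set E} {f : E → ℝ} {L : ℝ}
    (hf : ConcaveOn ℝ K f) (hL : 0 ≤ L) {z : E} (hz : z ∈ K)
    (hlip : ∀ y ∈ K, f y - f z ≤ L * ‖y - z‖) :
    ∃ g : E, ‖g‖ ≤ L ∧ ∀ y ∈ K, f y ≤ f z + ⟪g, y - z⟫_ℝ := by
  obtain ⟨φ, hφL, hφ⟩ := hf.exists_strongDual_supergradient hL hz hlip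
  refine ⟨(InnerProductSpace.toDual ℝ E).symm φ, by rwa [LinearIsometryEquiv.norm_map], ?_⟩
  simpa only [InnerProductSpace.toDual_symm_apply] using hφ

/-- Nesterov smoothing sandwich: `f̂_μ(z) − (μ/2)L ≤ f(z) ≤ f̂_μ(z)` for the smooth
approximation `f̂_μ(z) = min_{‖θ‖ ≤ L}(f*(θ) + (μ/(2L))‖θ‖² − θ·z)`. -/
theorem stmt_6 (d : ℕ) (L μ : ℝ) (hL : 0 < L) (hμ : 0 < μ)
    (f fstar fhat : EuclideanSpace ℝ (Fin d) → ℝ)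
    (hf : ConcaveOn ℝ (cube d) f)
    (hlip : ∀ x ∈ cube d, ∀ y ∈ cube d, |f x - f y| ≤ L * ‖x - y‖)
    (hfstar : ∀ θ, IsGreatest ((fun y => (inner ℝ y θ : ℝ) + f y) '' cube d) (fstar θ))
    (hfhat : ∀ z, IsLeast
        ((fun θ => fstar θ + μ / (2 * L) * ‖θ‖ ^ 2 - (inner ℝ θ z : ℝ)) '' {θ | ‖θ‖ ≤ L})
        (fhat z)) :
    ∀ z ∈ cube d, fhat z - μ / 2 * L ≤ f z ∧ f z ≤ fhat z := by
  intro z hz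
  constructor
  · obtain ⟨g, hgL, hg⟩ := hf.exists_inner_supergradient hL.le hz fun y hy =>
      (le_abs_self _).trans (hlip y hy z hz)
    have hconj : fstar (-g) ≤ ⟪-g, z⟫_ℝ + f z := by
      obtain ⟨y, hy, hfstar_eq⟩ := (hfstar (-g)).1
      have hsuper := hg y hy
      rw [← hfstar_eq]
      dsimp only
      rw [inner_sub_right] at hsuper
      rw [inner_neg_left, inner_neg_right, real_inner_comm g]
      linarith
    have hpen : μ / (2 * L) * ‖-g‖ ^ 2 ≤ μ / 2 * L :=
      calc μ / (2 * L) * ‖-g‖ ^ 2 ≤ μ / (2 * L) * L ^ 2 := by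
            rw [norm_neg]; gcongr
        _ = μ / 2 * L := by field_simp
    have := (hfhat z).2 ⟨-g, by simpa using hgL, rfl⟩
    dsimp only at this
    linarith
  · obtain ⟨θ, -, hfhat_eq⟩ := (hfhat z).1
    have := (hfstar θ).2 ⟨z, hz, rfl⟩
    rw [← hfhat_eq]
    dsimp only at this ⊢
    rw [real_inner_comm] at this
    linarith [show 0 ≤ μ / (2 * L) * ‖θ‖ ^ 2 by positivity]
end

section
/- With the setup of Nesterov smoothing (f concave and L-Lipschitz on [0,1]^d in Euclidean norm, f̂_μ(z) = min_{‖θ‖ ≤ L}(f*(θ) + (μ/(2L))‖θ‖² − θ·z)), the minimizer θ(z) in the definition of f̂_μ satisfies ‖θ(x₁) − θ(x₂)‖ ≤ (L/μ)‖x₁ − x₂‖ for all x₁, x₂ ∈ [0,1]^d. Consequently ∇f̂_μ is (L/μ)-Lipschitz. -/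
/-!
The conjugate `f*` is a pointwise maximum of the affine functions `θ ↦ ⟪y, θ⟫ + f y`, hence
convex, so `θ ↦ f*(θ) + (μ/(2L))‖θ‖² − ⟪θ, z⟫` is `(μ/L)`-strongly convex on the ball. A strongly
convex function grows quadratically away from its minimizer; adding these growth inequalities for
`z = x₁` and `z = x₂` at `θ(x₁)` and `θ(x₂)` cancels `f*` and the quadratic term and leaves
`(μ/L)‖θ(x₁) − θ(x₂)‖² ≤ ⟪θ(x₁) − θ(x₂), x₁ − x₂⟫`, and Cauchy–Schwarz finishes.
-/

open Set Filter Topology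

lemma convexOn_of_isGreatest_image {E ι : Type*} [AddCommGroup E] [Module ℝ E] {s : Set ι}
    {t : Set E} {ℓ : ι → E → ℝ} {F : E → ℝ} (ht : Convex ℝ t) (hℓ : ∀ i ∈ s, ConvexOn ℝ t (ℓ i))
    (hF : ∀ θ ∈ t, IsGreatest ((ℓ · θ) '' s) (F θ)) : ConvexOn ℝ t F := by
  refine ⟨ht, fun θ₁ hθ₁ θ₂ hθ₂ a b ha hb hab => ?_⟩
  obtain ⟨i, hi, hFi⟩ := (hF _ (ht hθ₁ hθ₂ ha hb hab)).1
  calc F (a • θ₁ + b • θ₂) = ℓ i (a • θ₁ + b • θ₂) := hFi.symm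
    _ ≤ a • ℓ i θ₁ + b • ℓ i θ₂ := (hℓ i hi).2 hθ₁ hθ₂ ha hb hab
    _ ≤ a • F θ₁ + b • F θ₂ := by
      gcongr
      · exact (hF θ₁ hθ₁).2 ⟨i, hi, rfl⟩
      · exact (hF θ₂ hθ₂).2 ⟨i, hi, rfl⟩

section

variable {E : Type*} [NormedAddCommGroup E] [InnerProductSpace ℝ E]

lemma ConvexOn.strongConvexOn_add_sq_norm {s : Set E} {f : E → ℝ} (hf : ConvexOn ℝ s f)
    (m : ℝ) : StrongConvexOn s m fun x => f x + m / 2 * ‖x‖ ^ 2 := by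
  simpa only [strongConvexOn_iff_convex, add_sub_cancel_right] using hf

lemma StrongConvexOn.sub_inner {s : Set E} {m : ℝ} {g : E → ℝ} (hg : StrongConvexOn s m g)
    (z : E) : StrongConvexOn s m fun v => g v - inner ℝ v z := by
  rw [strongConvexOn_iff_convex] at hg ⊢
  refine (hg.sub ((innerₛₗ ℝ z).concaveOn hg.1)).congr fun v _ => ?_
  simp only [Pi.sub_apply, innerₛₗ_apply_apply, real_inner_comm z v]
  ring

lemma StrongConvexOn.sq_norm_sub_le_of_isMinOn {s : Set E} {m : ℝ} {φ : E → ℝ} {a x : E}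
    (hφ : StrongConvexOn s m φ) (ha : a ∈ s) (hmin : IsMinOn φ s a) (hx : x ∈ s) :
    m / 2 * ‖x - a‖ ^ 2 ≤ φ x - φ a := by
  have hsegment : ∀ t ∈ Ioo (0 : ℝ) 1, (1 - t) * (m / 2 * ‖x - a‖ ^ 2) ≤ φ x - φ a := by
    rintro t ⟨ht₀, ht₁⟩
    have hconv := hφ.2 ha hx (sub_nonneg.2 ht₁.le) ht₀.le (sub_add_cancel 1 t)
    have hle : φ a ≤ φ ((1 - t) • a + t • x) :=
      hmin (hφ.1 ha hx (sub_nonneg.2 ht₁.le) ht₀.le (sub_add_cancel 1 t))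
    simp only [smul_eq_mul, norm_sub_rev a x] at hconv
    refine le_of_mul_le_mul_left ?_ ht₀
    linarith
  have hlim : Tendsto (fun t : ℝ => (1 - t) * (m / 2 * ‖x - a‖ ^ 2)) (𝓝[>] 0)
      (𝓝 (m / 2 * ‖x - a‖ ^ 2)) := by
    refine (Continuous.tendsto' ?_ 0 _ ?_).mono_left nhdsWithin_le_nhds
    · fun_prop
    · simp
  exact le_of_tendsto hlim (eventually_of_mem (Ioo_mem_nhdsGT zero_lt_one) hsegment)

variable {s : Set E} {m : ℝ} {g : E → ℝ} {θ : E → E}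

lemma StrongConvexOn.inner_sub_ge_of_isMinOn_sub_inner (hg : StrongConvexOn s m g)
    (hθs : ∀ z, θ z ∈ s) (hθ : ∀ z, IsMinOn (fun v => g v - inner ℝ v z) s (θ z)) (x y : E) :
    m * ‖θ x - θ y‖ ^ 2 ≤ inner ℝ (θ x - θ y) (x - y) := by
  have hx := (hg.sub_inner x).sq_norm_sub_le_of_isMinOn (hθs x) (hθ x) (hθs y)
  have hy := (hg.sub_inner y).sq_norm_sub_le_of_isMinOn (hθs y) (hθ y) (hθs x)
  rw [norm_sub_rev] at hx
  simp only [inner_sub_left, inner_sub_right, real_inner_comm] at hx hy ⊢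
  linarith

lemma StrongConvexOn.norm_sub_le_of_isMinOn_sub_inner (hg : StrongConvexOn s m g) (hm : 0 < m)
    (hθs : ∀ z, θ z ∈ s) (hθ : ∀ z, IsMinOn (fun v => g v - inner ℝ v z) s (θ z)) (x y : E) :
    ‖θ x - θ y‖ ≤ m⁻¹ * ‖x - y‖ := by
  have hmono : m * ‖θ x - θ y‖ ^ 2 ≤ ‖θ x - θ y‖ * ‖x - y‖ :=
    (hg.inner_sub_ge_of_isMinOn_sub_inner hθs hθ x y).trans (real_inner_le_norm _ _)
  rw [← div_eq_inv_mul, le_div_iff₀ hm]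
  rcases (norm_nonneg (θ x - θ y)).eq_or_lt with h | h
  · rw [← h, zero_mul]; positivity
  · nlinarith

end

theorem stmt_7_general (d : ℕ) (L μ : ℝ) (hL : 0 < L) (hμ : 0 < μ)
    (f fstar : EuclideanSpace ℝ (Fin d) → ℝ)
    (hfstar : ∀ θ, IsGreatest ((fun y => (inner ℝ y θ : ℝ) + f y) '' cube d) (fstar θ))
    (θfun : EuclideanSpace ℝ (Fin d) → EuclideanSpace ℝ (Fin d))
    (hθmem : ∀ z, ‖θfun z‖ ≤ L)
    (hθmin : ∀ z, ∀ θ, ‖θ‖ ≤ L →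
        fstar (θfun z) + μ / (2 * L) * ‖θfun z‖ ^ 2 - (inner ℝ (θfun z) z : ℝ) ≤
          fstar θ + μ / (2 * L) * ‖θ‖ ^ 2 - (inner ℝ θ z : ℝ)) :
    ∀ x₁ ∈ cube d, ∀ x₂ ∈ cube d, ‖θfun x₁ - θfun x₂‖ ≤ L / μ * ‖x₁ - x₂‖ := by
  intro x₁ _ x₂ _
  have hconv : ConvexOn ℝ univ fstar :=
    convexOn_of_isGreatest_image (ℓ := fun y θ => inner ℝ y θ + f y) convex_univ
      (fun y _ => ((innerₛₗ ℝ y).convexOn convex_univ).add_const (f y)) (fun θ _ => hfstar θ)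
  have hstrong := (hconv.subset (subset_univ _) (convex_closedBall 0 L)).strongConvexOn_add_sq_norm
      (μ / L)
  rw [div_div, mul_comm L 2] at hstrong
  have hmin (z : EuclideanSpace ℝ (Fin d)) :
      IsMinOn (fun v => fstar v + μ / (2 * L) * ‖v‖ ^ 2 - inner ℝ v z) (Metric.closedBall 0 L)
        (θfun z) := fun θ hθ => hθmin z θ (mem_closedBall_zero_iff.1 hθ)
  simpa only [inv_div] using hstrong.norm_sub_le_of_isMinOn_sub_inner (div_pos hμ hL)
    (fun z => mem_closedBall_zero_iff.2 (hθmem z)) hmin x₁ x₂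

/-- The minimizer `θ(z)` in the definition of Nesterov's smooth approximation
`f̂_μ(z) = min_{‖θ‖ ≤ L}(f*(θ) + (μ/(2L))‖θ‖² − θ·z)` is `(L/μ)`-Lipschitz in `z`;
consequently `∇f̂_μ = −θ(·)` is `(L/μ)`-Lipschitz. -/
theorem stmt_7 (d : ℕ) (L μ : ℝ) (hL : 0 < L) (hμ : 0 < μ)
    (f fstar : EuclideanSpace ℝ (Fin d) → ℝ)
    (hf : ConcaveOn ℝ (cube d) f)
    (hlip : ∀ x ∈ cube d, ∀ y ∈ cube d, |f x - f y| ≤ L * ‖x - y‖)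
    (hfstar : ∀ θ, IsGreatest ((fun y => (inner ℝ y θ : ℝ) + f y) '' cube d) (fstar θ))
    (θfun : EuclideanSpace ℝ (Fin d) → EuclideanSpace ℝ (Fin d))
    (hθmem : ∀ z, ‖θfun z‖ ≤ L)
    (hθmin : ∀ z, ∀ θ, ‖θ‖ ≤ L →
        fstar (θfun z) + μ / (2 * L) * ‖θfun z‖ ^ 2 - (inner ℝ (θfun z) z : ℝ) ≤
          fstar θ + μ / (2 * L) * ‖θ‖ ^ 2 - (inner ℝ θ z : ℝ)) :
    ∀ x₁ ∈ cube d, ∀ x₂ ∈ cube d, ‖θfun x₁ - θfun x₂‖ ≤ L / μ * ‖x₁ - x₂‖ :=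
  stmt_7_general d L μ hL hμ f fstar hfstar θfun hθmem hθmin
end

section
/- Let S ⊆ ℝ^d be a nonempty closed convex set, π_S the Euclidean projection onto S, and μ > 0. Define the smoothed distance d̂_μ(z,S) = max_{‖θ‖≤1}(θ·z − h_S(θ) − (μ/2)‖θ‖²). Then the maximizing θ is: θ = (z − π_S(z))/‖z − π_S(z)‖ if ‖z − π_S(z)‖ ≥ μ; θ = (z − π_S(z))/μ if 0 < ‖z − π_S(z)‖ < μ; and θ = 0 if z ∈ S. -/
/-!
Write `v = z − π z` and `r = ‖v‖`. For every `θ`, the support function satisfies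
`h_S(θ) ≥ θ·π z`, so the objective is at most `‖θ‖ r − (μ/2)‖θ‖²` by Cauchy–Schwarz. The
variational inequality of the projection says that `π z` maximizes `s ↦ v·s` on `S`, so along the
ray `θ = c v`, `c ≥ 0`, both inequalities are equalities. It remains to maximize the scalar
quadratic `t ↦ t r − (μ/2) t²` over `t ∈ [0, 1]`: the maximum sits at `t = min 1 (r/μ)`, which is
the norm of the claimed maximizer.
-/

open RealInnerProductSpace

theorem mul_sub_half_mul_sq_le_min {μ r t : ℝ} (hμ : 0 < μ) (ht : t ≤ 1) :
    t * r - μ / 2 * t ^ 2 ≤ min 1 (r / μ) * r - μ / 2 * min 1 (r / μ) ^ 2 := by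
  rcases le_total 1 (r / μ) with h | h
  · rw [min_eq_left h]
    rw [one_le_div hμ] at h
    nlinarith [mul_nonneg (sub_nonneg.2 ht) (sub_nonneg.2 h),
      mul_nonneg hμ.le (sq_nonneg (1 - t))]
  · rw [min_eq_right h]
    have key : t * r - μ / 2 * t ^ 2 ≤ r ^ 2 / (2 * μ) := by
      rw [le_div_iff₀ (by positivity)]
      nlinarith [sq_nonneg (r - μ * t)]
    convert key using 1
    field_simp
    ring

theorem ite_inv_mul_eq_min {μ r : ℝ} (hμ : 0 < μ) :
    (if μ ≤ r then r⁻¹ else μ⁻¹) * r = min 1 (r / μ) := by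
  split_ifs with h
  · rw [inv_mul_cancel₀ (hμ.trans_le h).ne', min_eq_left ((one_le_div hμ).2 h)]
  · rw [inv_mul_eq_div, min_eq_right ((div_le_one hμ).2 (not_le.1 h).le)]

section

variable {E : Type*} [NormedAddCommGroup E] [InnerProductSpace ℝ E]

theorem Convex.inner_le_inner_of_forall_norm_sub_le {S : Set E} (hS : Convex ℝ S) {z p : E}
    (hp : p ∈ S) (hmin : ∀ s ∈ S, ‖z - p‖ ≤ ‖z - s‖) (s : E) (hs : s ∈ S) :
    ⟪z - p, s⟫ ≤ ⟪z - p, p⟫ := by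
  have : Nonempty S := ⟨⟨p, hp⟩⟩
  have hinf : ‖z - p‖ = ⨅ w : S, ‖z - w‖ :=
    le_antisymm (le_ciInf fun w => hmin w w.2)
      (ciInf_le ⟨0, by rintro _ ⟨w, rfl⟩; exact norm_nonneg _⟩ (⟨p, hp⟩ : S))
  have := (norm_eq_iInf_iff_real_inner_le_zero hS hp).1 hinf s hs
  rw [inner_sub_right] at this
  linarith

theorem inner_sub_le_norm_mul_norm_sub_of_isLUB {S : Set E} {θ z p : E} {h : ℝ}
    (hh : IsLUB ((fun s => ⟪θ, s⟫) '' S) h) (hp : p ∈ S) :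
    ⟪θ, z⟫ - h ≤ ‖θ‖ * ‖z - p‖ := by
  have hθp : ⟪θ, p⟫ ≤ h := hh.1 ⟨p, hp, rfl⟩
  have hθv : ⟪θ, z - p⟫ ≤ ‖θ‖ * ‖z - p‖ := real_inner_le_norm θ (z - p)
  rw [inner_sub_right] at hθv
  linarith

theorem inner_smul_sub_eq_norm_mul_norm_of_isLUB {S : Set E} {z p : E} {c h : ℝ} (hc : 0 ≤ c)
    (hh : IsLUB ((fun s => ⟪c • (z - p), s⟫) '' S) h) (hp : p ∈ S)
    (hmax : ∀ s ∈ S, ⟪z - p, s⟫ ≤ ⟪z - p, p⟫) :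
    ⟪c • (z - p), z⟫ - h = ‖c • (z - p)‖ * ‖z - p‖ := by
  have hgreatest : IsGreatest ((fun s => ⟪c • (z - p), s⟫) '' S) ⟪c • (z - p), p⟫ := by
    refine ⟨⟨p, hp, rfl⟩, ?_⟩
    rintro _ ⟨s, hs, rfl⟩
    simp only [real_inner_smul_left]
    exact mul_le_mul_of_nonneg_left (hmax s hs) hc
  rw [hh.unique hgreatest.isLUB, ← inner_sub_right, real_inner_smul_left, real_inner_self_eq_norm_sq,
    norm_smul, Real.norm_of_nonneg hc]
  ring

end

theorem stmt_12_general (d : ℕ) (μ : ℝ) (hμ : 0 < μ)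
    (S : Set (EuclideanSpace ℝ (Fin d)))
    (hSconv : Convex ℝ S)
    (π : EuclideanSpace ℝ (Fin d) → EuclideanSpace ℝ (Fin d))
    (hπ : ∀ z, π z ∈ S ∧ ∀ s ∈ S, ‖z - π z‖ ≤ ‖z - s‖)
    (hS : EuclideanSpace ℝ (Fin d) → ℝ)
    (hhS : ∀ θ, IsLUB ((fun s => (inner ℝ θ s : ℝ)) '' S) (hS θ))
    (z : EuclideanSpace ℝ (Fin d)) :
    IsGreatest
      ((fun θ => (inner ℝ θ z : ℝ) - hS θ - μ / 2 * ‖θ‖ ^ 2) '' {θ | ‖θ‖ ≤ 1})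
      ((fun θ => (inner ℝ θ z : ℝ) - hS θ - μ / 2 * ‖θ‖ ^ 2)
        (if μ ≤ ‖z - π z‖ then ‖z - π z‖⁻¹ • (z - π z) else μ⁻¹ • (z - π z))) := by
  obtain ⟨hp, hmin⟩ := hπ z
  rw [← ite_smul]
  set r := ‖z - π z‖
  set c : ℝ := if μ ≤ r then r⁻¹ else μ⁻¹
  have hc : 0 ≤ c := by unfold c; split_ifs <;> positivity
  have hnorm : ‖c • (z - π z)‖ = min 1 (r / μ) := by
    rw [norm_smul, Real.norm_of_nonneg hc, ite_inv_mul_eq_min hμ]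
  have hval := inner_smul_sub_eq_norm_mul_norm_of_isLUB hc (hhS _) hp
    (hSconv.inner_le_inner_of_forall_norm_sub_le hp hmin)
  refine ⟨⟨c • (z - π z), hnorm.trans_le (min_le_left _ _), rfl⟩, ?_⟩
  rintro _ ⟨θ, hθ, rfl⟩
  have hle := inner_sub_le_norm_mul_norm_sub_of_isLUB (z := z) (hhS θ) hp
  have hquad := mul_sub_half_mul_sq_le_min (r := r) hμ hθ
  simp only [hnorm] at hval ⊢
  linarith

/-- The maximizer of `θ ↦ θ·z − h_S(θ) − (μ/2)‖θ‖²` over the unit Euclidean ball is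
`(z − π_S(z))/‖z − π_S(z)‖` if `‖z − π_S(z)‖ ≥ μ`, `(z − π_S(z))/μ` if
`0 < ‖z − π_S(z)‖ < μ`, and `0` if `z ∈ S` (the latter two cases combine into
`(z − π_S(z))/μ`). -/
theorem stmt_12 (d : ℕ) (μ : ℝ) (hμ : 0 < μ)
    (S : Set (EuclideanSpace ℝ (Fin d)))
    (hSne : S.Nonempty) (hSclosed : IsClosed S) (hSconv : Convex ℝ S)
    (π : EuclideanSpace ℝ (Fin d) → EuclideanSpace ℝ (Fin d))
    (hπ : ∀ z, π z ∈ S ∧ ∀ s ∈ S, ‖z - π z‖ ≤ ‖z - s‖)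
    (hS : EuclideanSpace ℝ (Fin d) → ℝ)
    (hhS : ∀ θ, IsLUB ((fun s => (inner ℝ θ s : ℝ)) '' S) (hS θ))
    (z : EuclideanSpace ℝ (Fin d)) :
    IsGreatest
      ((fun θ => (inner ℝ θ z : ℝ) - hS θ - μ / 2 * ‖θ‖ ^ 2) '' {θ | ‖θ‖ ≤ 1})
      ((fun θ => (inner ℝ θ z : ℝ) - hS θ - μ / 2 * ‖θ‖ ^ 2)
        (if μ ≤ ‖z - π z‖ then ‖z - π z‖⁻¹ • (z - π z) else μ⁻¹ • (z - π z))) :=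
  stmt_12_general d μ hμ S hSconv π hπ hS hhS z
end

section
/- Let f : [0,1]^d → ℝ be concave with supergradients bounded by L in dual norm, and let H be a hypercube of matrices in [0,1]^{d×m}. Then the function ψ(p) = max_{M̃ ∈ H} f(M̃p) is concave on the probability simplex Δ_m, and g(p) = min_{M̂ ∈ H} d(M̂p, S) is convex on Δ_m for any convex set S ⊆ ℝ^d. -/
open Finset

/-- The probability simplex in `ℝ^m`. -/
def simplex (m : ℕ) : Set (Fin m → ℝ) := {p | (∀ i, 0 ≤ p i) ∧ ∑ i, p i = 1}

private lemma infDist_combo {E : Type*} [NormedAddCommGroup E] [NormedSpace ℝ E] {S : Set E}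
    (hS : Convex ℝ S) (hne : S.Nonempty) (x y : E) {a b : ℝ}
    (ha : 0 ≤ a) (hb : 0 ≤ b) (hab : a + b = 1) :
    Metric.infDist (a • x + b • y) S ≤ a * Metric.infDist x S + b * Metric.infDist y S := by
  refine le_of_forall_pos_le_add fun ε hε => ?_
  obtain ⟨z, hzS, hz⟩ := (Metric.infDist_lt_iff hne).1
    (lt_add_of_pos_right _ hε : Metric.infDist x S < Metric.infDist x S + ε)
  obtain ⟨w, hwS, hw⟩ := (Metric.infDist_lt_iff hne).1
    (lt_add_of_pos_right _ hε : Metric.infDist y S < Metric.infDist y S + ε)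
  have hmem : a • z + b • w ∈ S := hS hzS hwS ha hb hab
  have h1 : Metric.infDist (a • x + b • y) S ≤ dist (a • x + b • y) (a • z + b • w) :=
    Metric.infDist_le_dist_of_mem hmem
  have h2 : dist (a • x + b • y) (a • z + b • w) ≤ dist (a • x) (a • z) + dist (b • y) (b • w) :=
    dist_add_add_le _ _ _ _
  have h3 : dist (a • x) (a • z) = a * dist x z := by
    rw [dist_smul₀, Real.norm_eq_abs, abs_of_nonneg ha]
  have h4 : dist (b • y) (b • w) = b * dist y w := by
    rw [dist_smul₀, Real.norm_eq_abs, abs_of_nonneg hb]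
  have h5 : a * dist x z ≤ a * (Metric.infDist x S + ε) :=
    mul_le_mul_of_nonneg_left hz.le ha
  have h6 : b * dist y w ≤ b * (Metric.infDist y S + ε) :=
    mul_le_mul_of_nonneg_left hw.le hb
  nlinarith [h1, h2, h3, h4, h5, h6]

/-- `ψ(p) = max_{M̃ ∈ H} f(M̃p)` is concave on the simplex and
`g(p) = min_{M̂ ∈ H} d(M̂p, S)` is convex on the simplex, where `H` is a hypercube of
matrices with entries in `[0,1]`, `f` is concave with bounded supergradients, and `S` is
convex. -/
theorem stmt_17 (d m : ℕ) (Lf : ℝ) (hLf : 0 ≤ Lf)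
    (Lm Um : Matrix (Fin d) (Fin m) ℝ)
    (hLU : ∀ j i, 0 ≤ Lm j i ∧ Lm j i ≤ Um j i ∧ Um j i ≤ 1)
    (f : (Fin d → ℝ) → ℝ)
    (hf : ConcaveOn ℝ (Set.Icc (0 : Fin d → ℝ) 1) f)
    (hflip : ∀ x ∈ Set.Icc (0 : Fin d → ℝ) 1, ∀ y ∈ Set.Icc (0 : Fin d → ℝ) 1,
        |f x - f y| ≤ Lf * ‖x - y‖)
    (S : Set (Fin d → ℝ)) (hSconv : Convex ℝ S) (hSne : S.Nonempty)
    (ψ g : (Fin m → ℝ) → ℝ)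
    (hψ : ∀ p, IsGreatest
        ((fun Mt : Matrix (Fin d) (Fin m) ℝ => f (Mt.mulVec p)) ''
          {Mt | ∀ j i, Lm j i ≤ Mt j i ∧ Mt j i ≤ Um j i}) (ψ p))
    (hg : ∀ p, IsLeast
        ((fun Mh : Matrix (Fin d) (Fin m) ℝ => Metric.infDist (Mh.mulVec p) S) ''
          {Mt | ∀ j i, Lm j i ≤ Mt j i ∧ Mt j i ≤ Um j i}) (g p)) :
    ConcaveOn ℝ (simplex m) ψ ∧ ConvexOn ℝ (simplex m) g := by
  have hconvset : Convex ℝ (simplex m) := convex_stdSimplex ℝ (Fin m)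
  -- combination matrix construction
  have key : ∀ p q : Fin m → ℝ, (∀ i, 0 ≤ p i) → (∀ i, 0 ≤ q i) → ∀ a b : ℝ, 0 ≤ a → 0 ≤ b →
      ∀ M₁ M₂ : Matrix (Fin d) (Fin m) ℝ,
      (∀ j i, Lm j i ≤ M₁ j i ∧ M₁ j i ≤ Um j i) →
      (∀ j i, Lm j i ≤ M₂ j i ∧ M₂ j i ≤ Um j i) →
      ∃ M : Matrix (Fin d) (Fin m) ℝ,
        (∀ j i, Lm j i ≤ M j i ∧ M j i ≤ Um j i) ∧
        M.mulVec (a • p + b • q) = a • M₁.mulVec p + b • M₂.mulVec q := by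
    intro p q hp hq a b ha hb M₁ M₂ hM₁ hM₂
    refine ⟨fun j i => if a * p i + b * q i = 0 then Lm j i
      else (a * M₁ j i * p i + b * M₂ j i * q i) / (a * p i + b * q i), ?_, ?_⟩
    · intro j i
      by_cases h : a * p i + b * q i = 0
      · simp only [h, if_pos rfl, if_true]
        exact ⟨le_refl _, (hLU j i).2.1⟩
      · have hpi : 0 ≤ a * p i := mul_nonneg ha (hp i)
        have hqi : 0 ≤ b * q i := mul_nonneg hb (hq i)
        have hpos : 0 < a * p i + b * q i := lt_of_le_of_ne (by linarith) (Ne.symm h)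
        simp only [if_neg h]
        constructor
        · rw [le_div_iff₀ hpos]
          have e1 : a * p i * Lm j i ≤ a * p i * M₁ j i :=
            mul_le_mul_of_nonneg_left (hM₁ j i).1 hpi
          have e2 : b * q i * Lm j i ≤ b * q i * M₂ j i :=
            mul_le_mul_of_nonneg_left (hM₂ j i).1 hqi
          nlinarith [e1, e2]
        · rw [div_le_iff₀ hpos]
          have e1 : a * p i * M₁ j i ≤ a * p i * Um j i :=
            mul_le_mul_of_nonneg_left (hM₁ j i).2 hpi
          have e2 : b * q i * M₂ j i ≤ b * q i * Um j i :=
            mul_le_mul_of_nonneg_left (hM₂ j i).2 hqi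
          nlinarith [e1, e2]
    · funext j
      simp only [Matrix.mulVec, dotProduct, Pi.add_apply, Pi.smul_apply, smul_eq_mul]
      rw [Finset.mul_sum, Finset.mul_sum, ← Finset.sum_add_distrib]
      refine Finset.sum_congr rfl fun i _ => ?_
      by_cases h : a * p i + b * q i = 0
      · have hpi : 0 ≤ a * p i := mul_nonneg ha (hp i)
        have hqi : 0 ≤ b * q i := mul_nonneg hb (hq i)
        have h1 : a * p i = 0 := by linarith
        have h2 : b * q i = 0 := by linarith
        simp only [if_pos h]
        linear_combination Lm j i * h - M₁ j i * h1 - M₂ j i * h2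
      · simp only [if_neg h]
        rw [div_mul_cancel₀ _ h]
        ring
  -- images lie in the unit cube
  have hmem : ∀ p : Fin m → ℝ, (∀ i, 0 ≤ p i) → ∑ i, p i = 1 →
      ∀ M : Matrix (Fin d) (Fin m) ℝ, (∀ j i, Lm j i ≤ M j i ∧ M j i ≤ Um j i) →
      M.mulVec p ∈ Set.Icc (0 : Fin d → ℝ) 1 := by
    intro p hp hps M hM
    constructor
    · intro j
      simp only [Matrix.mulVec, dotProduct, Pi.zero_apply]
      exact Finset.sum_nonneg fun i _ =>
        mul_nonneg (le_trans (hLU j i).1 (hM j i).1) (hp i)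
    · intro j
      simp only [Matrix.mulVec, dotProduct, Pi.one_apply]
      calc ∑ i, M j i * p i ≤ ∑ i, p i :=
            Finset.sum_le_sum fun i _ =>
              mul_le_of_le_one_left (hp i) (le_trans (hM j i).2 (hLU j i).2.2)
        _ = 1 := hps
  constructor
  · refine ⟨hconvset, fun p hp q hq a b ha hb hab => ?_⟩
    obtain ⟨M₁, hM₁, hv₁⟩ := (hψ p).1
    obtain ⟨M₂, hM₂, hv₂⟩ := (hψ q).1
    obtain ⟨M, hMH, hMeq⟩ := key p q hp.1 hq.1 a b ha hb M₁ M₂ hM₁ hM₂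
    have h1 : f (M.mulVec (a • p + b • q)) ≤ ψ (a • p + b • q) :=
      (hψ (a • p + b • q)).2 (Set.mem_image_of_mem _ hMH)
    rw [hMeq] at h1
    have h2 := hf.2 (hmem p hp.1 hp.2 M₁ hM₁) (hmem q hq.1 hq.2 M₂ hM₂) ha hb hab
    rw [← hv₁, ← hv₂]
    exact le_trans h2 h1
  · refine ⟨hconvset, fun p hp q hq a b ha hb hab => ?_⟩
    obtain ⟨M₁, hM₁, hv₁⟩ := (hg p).1
    obtain ⟨M₂, hM₂, hv₂⟩ := (hg q).1
    obtain ⟨M, hMH, hMeq⟩ := key p q hp.1 hq.1 a b ha hb M₁ M₂ hM₁ hM₂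
    have h1 : g (a • p + b • q) ≤ Metric.infDist (M.mulVec (a • p + b • q)) S :=
      (hg (a • p + b • q)).2 (Set.mem_image_of_mem _ hMH)
    rw [hMeq] at h1
    have h2 := infDist_combo hSconv hSne (M₁.mulVec p) (M₂.mulVec q) ha hb hab
    rw [← hv₁, ← hv₂]
    simpa using le_trans h1 h2
end
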